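/- arXiv:2003.06025 — 8 statements merged into one kernel-verified Lean document; each statement's English description precedes it below -/
import Mathlib

section
/- For a sequence of positive weights (λ_n), the sequence of partial sums Λ_n = λ_1 + ... + λ_n converges (to a finite limit) if and only if the series ∑_{n=1}^∞ λ_n/Λ_n converges. -/
open Filter Topology

/-- For a sequence of positive weights `(λ_n)`, the sequence of partial sums
`Λ_n = λ_1 + ... + λ_n` converges (to a finite limit) if and only if the series
`∑ λ_n / Λ_n` converges. -/
theorem partial_sums_converge_iff_summable_ratio (lam : ℕ → ℝ) (hpos : ∀ n, 0 < lam n) :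
    (∃ L : ℝ, Tendsto (fun n => ∑ i ∈ Finset.range (n + 1), lam i) atTop (𝓝 L)) ↔
      Summable (fun n => lam n / ∑ i ∈ Finset.range (n + 1), lam i) := by
  set S : ℕ → ℝ := fun n => ∑ i ∈ Finset.range (n + 1), lam i with hS
  have hS0 : ∀ n, 0 < S n := fun n =>
    Finset.sum_pos (fun i _ => hpos i) ⟨0, Finset.mem_range.2 (Nat.succ_pos n)⟩
  have hmono : Monotone S := fun a b hab =>
    Finset.sum_le_sum_of_subset_of_nonneg
      (Finset.range_subset_range.2 (by omega)) (fun i _ _ => (hpos i).le)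
  constructor
  · rintro ⟨L, hL⟩
    have hT : Tendsto (fun n => ∑ i ∈ Finset.range n, lam i) atTop (𝓝 L) := by
      rw [← tendsto_add_atTop_iff_nat 1]; exact hL
    have hle : ∀ n, ∑ i ∈ Finset.range n, lam i ≤ L := by
      intro n
      exact Monotone.ge_of_tendsto
        (fun a b hab => Finset.sum_le_sum_of_subset_of_nonneg
          (Finset.range_subset_range.2 hab) (fun i _ _ => (hpos i).le)) hT n
    have hsum : Summable lam := summable_of_sum_range_le (fun n => (hpos n).le) hle
    apply Summable.of_nonneg_of_le
      (fun n => div_nonneg (hpos n).le (hS0 n).le)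
      (fun n => ?_) (hsum.div_const (lam 0))
    exact div_le_div_of_nonneg_left (hpos n).le (hpos 0)
      (Finset.single_le_sum (fun i _ => (hpos i).le) (Finset.mem_range.2 (Nat.succ_pos n)))
  · intro h
    have hbdd : BddAbove (Set.range S) := by
      by_contra hnb
      have hS_top : Tendsto S atTop atTop := tendsto_atTop_atTop_of_monotone' hmono hnb
      have hcauchy : CauchySeq (fun n => ∑ i ∈ Finset.range n, lam i / S i) :=
        h.hasSum.tendsto_sum_nat.cauchySeq
      obtain ⟨N, hN⟩ := Metric.cauchySeq_iff'.1 hcauchy (1/2) (by norm_num)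
      obtain ⟨m, hm1, hm2⟩ :=
        ((hS_top.eventually_gt_atTop (2 * S N)).and (eventually_ge_atTop (N + 1))).exists
      have hd := hN (m + 1) (by omega)
      have hIco : ∑ i ∈ Finset.range (m + 1), lam i / S i
          - ∑ i ∈ Finset.range N, lam i / S i
          = ∑ i ∈ Finset.Ico N (m + 1), lam i / S i := by
        rw [Finset.sum_Ico_eq_sub _ (by omega)]
      have hlow : (1 : ℝ) / 2 < ∑ i ∈ Finset.Ico N (m + 1), lam i / S i := by
        have h1 : ∑ i ∈ Finset.Ico N (m + 1), lam i / S m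
            ≤ ∑ i ∈ Finset.Ico N (m + 1), lam i / S i := by
          apply Finset.sum_le_sum
          intro i hi
          exact div_le_div_of_nonneg_left (hpos i).le (hS0 i)
            (hmono (Nat.lt_succ_iff.1 (Finset.mem_Ico.1 hi).2))
        have h2 : ∑ i ∈ Finset.Ico N (m + 1), lam i / S m
            = (S m - ∑ i ∈ Finset.range N, lam i) / S m := by
          rw [← Finset.sum_div, Finset.sum_Ico_eq_sub _ (by omega)]
        have h3 : ∑ i ∈ Finset.range N, lam i ≤ S N :=
          Finset.sum_le_sum_of_subset_of_nonneg
            (Finset.range_subset_range.2 (by omega)) (fun i _ _ => (hpos i).le)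
        have hSm : 0 < S m := hS0 m
        have : (1 : ℝ) / 2 < (S m - S N) / S m := by
          rw [lt_div_iff₀ hSm]
          nlinarith [hS0 N]
        calc (1 : ℝ) / 2 < (S m - S N) / S m := this
          _ ≤ (S m - ∑ i ∈ Finset.range N, lam i) / S m := by
              gcongr
          _ = ∑ i ∈ Finset.Ico N (m + 1), lam i / S m := h2.symm
          _ ≤ _ := h1
      rw [Real.dist_eq] at hd
      have := abs_lt.1 hd
      linarith [hIco ▸ this.2]
    exact ⟨_, tendsto_atTop_ciSup hmono hbdd⟩
end

section
/- For every sequence of positive weights λ and every nonnegative sequence x with ∑ λ_n x_n < ∞, one has ∑_{n=1}^∞ λ_n · (λ_1 x_1 + ... + λ_n x_n)/Λ_n ≤ (∑_{m=1}^∞ λ_m/Λ_m) · ∑_{n=1}^∞ λ_n x_n, where Λ_n = λ_1 + ... + λ_n. -/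
open Filter Topology
open scoped ENNReal

/-- weighted Hardy inequality for the arithmetic mean with constant
`∑ λ_m / Λ_m`. -/
theorem weighted_hardy_arith_mean (lam x : ℕ → ℝ) (hlam : ∀ n, 0 < lam n)
    (hx : ∀ n, 0 ≤ x n)
    (hfin : (∑' n, ENNReal.ofReal (lam n * x n)) ≠ ⊤) :
    ∑' n, ENNReal.ofReal (lam n *
        ((∑ i ∈ Finset.range (n + 1), lam i * x i) / ∑ i ∈ Finset.range (n + 1), lam i)) ≤
      (∑' m, ENNReal.ofReal (lam m / ∑ i ∈ Finset.range (m + 1), lam i)) *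
        ∑' n, ENNReal.ofReal (lam n * x n) := by
  set Λ : ℕ → ℝ := fun n => ∑ i ∈ Finset.range (n + 1), lam i with hΛ
  have hΛpos : ∀ n, 0 < Λ n := fun n =>
    Finset.sum_pos (fun i _ => hlam i) ⟨0, Finset.mem_range.2 (Nat.succ_pos n)⟩
  set g : ℕ → ℕ → ℝ≥0∞ := fun n i =>
    if i ≤ n then ENNReal.ofReal (lam n / Λ n) * ENNReal.ofReal (lam i * x i) else 0 with hg
  have hterm : ∀ n, ENNReal.ofReal (lam n *
      ((∑ i ∈ Finset.range (n + 1), lam i * x i) / Λ n)) = ∑' i, g n i := by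
    intro n
    have h1 : lam n * ((∑ i ∈ Finset.range (n + 1), lam i * x i) / Λ n)
        = ∑ i ∈ Finset.range (n + 1), (lam n / Λ n) * (lam i * x i) := by
      rw [← Finset.mul_sum]
      ring
    rw [h1, ENNReal.ofReal_sum_of_nonneg (fun i _ => mul_nonneg (div_nonneg (hlam n).le (hΛpos n).le) (mul_nonneg (hlam i).le (hx i)))]
    rw [tsum_eq_sum (s := Finset.range (n + 1)) (f := g n)
      (fun i hi => by simp [hg, Nat.lt_succ_iff.not.1 (Finset.mem_range.not.1 hi)])]
    refine Finset.sum_congr rfl fun i hi => ?_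
    rw [hg]
    simp only [Nat.lt_succ_iff.1 (Finset.mem_range.1 hi), if_true]
    rw [ENNReal.ofReal_mul (div_nonneg (hlam n).le (hΛpos n).le)]
  calc ∑' n, ENNReal.ofReal (lam n *
        ((∑ i ∈ Finset.range (n + 1), lam i * x i) / Λ n))
      = ∑' n, ∑' i, g n i := tsum_congr hterm
    _ = ∑' i, ∑' n, g n i := ENNReal.tsum_comm
    _ ≤ ∑' i, ∑' n, ENNReal.ofReal (lam n / Λ n) * ENNReal.ofReal (lam i * x i) := by
        refine ENNReal.tsum_le_tsum fun i => ENNReal.tsum_le_tsum fun n => ?_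
        dsimp only [g]; split
        · exact le_rfl
        · exact zero_le
    _ = ∑' i, (∑' n, ENNReal.ofReal (lam n / Λ n)) * ENNReal.ofReal (lam i * x i) := by
        refine tsum_congr fun i => ?_
        rw [ENNReal.tsum_mul_right]
    _ = (∑' m, ENNReal.ofReal (lam m / Λ m)) * ∑' n, ENNReal.ofReal (lam n * x n) := by
        rw [ENNReal.tsum_mul_left]
end

section
/- The constant ∑_{m=1}^∞ λ_m/Λ_m is sharp for the weighted Hardy inequality for the arithmetic mean: for every C < ∑_{m=1}^∞ λ_m/Λ_m there exists a positive sequence x with ∑ λ_n x_n < ∞ such that ∑_{n=1}^∞ λ_n · (λ_1x_1+...+λ_nx_n)/Λ_n > C · ∑_{n=1}^∞ λ_n x_n. -/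
open Filter Topology
open scoped ENNReal

/-- the constant `∑ λ_m/Λ_m` is sharp in the weighted Hardy inequality for the
arithmetic mean: every smaller extended real `C` is beaten by some positive sequence `x`
with `∑ λ_n x_n < ∞`. -/
theorem weighted_hardy_arith_mean_sharp (lam : ℕ → ℝ) (hlam : ∀ n, 0 < lam n)
    (C : ℝ≥0∞)
    (hC : C < ∑' m, ENNReal.ofReal (lam m / ∑ i ∈ Finset.range (m + 1), lam i)) :
    ∃ x : ℕ → ℝ, (∀ n, 0 < x n) ∧ (∑' n, ENNReal.ofReal (lam n * x n)) ≠ ⊤ ∧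
      C * ∑' n, ENNReal.ofReal (lam n * x n) <
        ∑' n, ENNReal.ofReal (lam n *
          ((∑ i ∈ Finset.range (n + 1), lam i * x i) / ∑ i ∈ Finset.range (n + 1), lam i)) := by
  have hΛ : ∀ n, 0 < ∑ i ∈ Finset.range (n + 1), lam i := fun n =>
    Finset.sum_pos (fun i _ => hlam i) (by simp)
  -- extract a finite partial sum exceeding C
  rw [ENNReal.tsum_eq_iSup_sum, lt_iSup_iff] at hC
  obtain ⟨s, hs⟩ := hC
  obtain ⟨N, hsN⟩ := s.exists_nat_subset_range
  have hN : C < ∑ m ∈ Finset.range N,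
      ENNReal.ofReal (lam m / ∑ i ∈ Finset.range (m + 1), lam i) :=
    hs.trans_le (Finset.sum_le_sum_of_subset hsN)
  set p : ℝ := ∑ m ∈ Finset.range N, lam m / ∑ i ∈ Finset.range (m + 1), lam i with hp
  have hsum : ∑ m ∈ Finset.range N,
      ENNReal.ofReal (lam m / ∑ i ∈ Finset.range (m + 1), lam i) = ENNReal.ofReal p := by
    rw [hp, ENNReal.ofReal_sum_of_nonneg]
    intro i _
    exact div_nonneg (hlam i).le (hΛ i).le
  rw [hsum] at hN
  have hCtop : C ≠ ⊤ := ne_top_of_lt hN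
  set c : ℝ := C.toReal with hcdef
  have hc0 : 0 ≤ c := ENNReal.toReal_nonneg
  have hc : C = ENNReal.ofReal c := (ENNReal.ofReal_toReal hCtop).symm
  have hcp : c < p := (ENNReal.lt_ofReal_iff_toReal_lt hCtop).mp hN
  have hp0 : 0 < p := lt_of_le_of_lt hc0 hcp
  set θ : ℝ := (c + p) / (2 * p) with hθdef
  have hθpos : 0 < θ := div_pos (by linarith) (by linarith)
  have hθ1 : θ < 1 := (div_lt_one (by linarith)).mpr (by linarith)
  have hθp : c < θ * p := by
    have : θ * p = (c + p) / 2 := by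
      rw [hθdef, div_mul_eq_mul_div, mul_comm 2 p, ← div_div, mul_div_cancel_right₀ _ hp0.ne']
    rw [this]; linarith
  set q : ℝ := 1 - θ with hqdef
  have hq0 : 0 < q := by simp only [hqdef]; linarith
  have hq1 : q < 1 := by simp only [hqdef]; linarith
  refine ⟨fun n => q ^ n / lam n, fun n => div_pos (pow_pos hq0 n) (hlam n), ?_, ?_⟩
  · -- finiteness of ∑ λ_n x_n
    have key : ∀ n : ℕ, lam n * (q ^ n / lam n) = q ^ n := fun n => by
      rw [mul_comm, div_mul_cancel₀ _ (hlam n).ne']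
    have hS : (∑' n, ENNReal.ofReal (lam n * (q ^ n / lam n)))
        = (1 - ENNReal.ofReal q)⁻¹ := by
      calc ∑' n, ENNReal.ofReal (lam n * (q ^ n / lam n))
          = ∑' n, (ENNReal.ofReal q) ^ n := by
            refine tsum_congr fun n => ?_
            rw [key n, ENNReal.ofReal_pow hq0.le]
        _ = (1 - ENNReal.ofReal q)⁻¹ := ENNReal.tsum_geometric _
    rw [hS]
    have hpos : (0 : ℝ≥0∞) < 1 - ENNReal.ofReal q :=
      tsub_pos_of_lt (ENNReal.ofReal_lt_one.mpr hq1)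
    exact ENNReal.inv_ne_top.mpr hpos.ne'
  · -- the strict inequality
    have key : ∀ n : ℕ, lam n * (q ^ n / lam n) = q ^ n := fun n => by
      rw [mul_comm, div_mul_cancel₀ _ (hlam n).ne']
    have hS : (∑' n, ENNReal.ofReal (lam n * (q ^ n / lam n)))
        = (1 - ENNReal.ofReal q)⁻¹ := by
      calc ∑' n, ENNReal.ofReal (lam n * (q ^ n / lam n))
          = ∑' n, (ENNReal.ofReal q) ^ n := by
            refine tsum_congr fun n => ?_
            rw [key n, ENNReal.ofReal_pow hq0.le]
        _ = (1 - ENNReal.ofReal q)⁻¹ := ENNReal.tsum_geometric _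
    have hsub : (1 : ℝ≥0∞) - ENNReal.ofReal q = ENNReal.ofReal θ := by
      rw [← ENNReal.ofReal_one, ← ENNReal.ofReal_sub _ hq0.le]
      congr 1
      simp [hqdef]
    have hL : C * (∑' n, ENNReal.ofReal (lam n * (q ^ n / lam n)))
        = ENNReal.ofReal (c / θ) := by
      rw [hS, hsub, ← ENNReal.ofReal_inv_of_pos hθpos, hc, ← ENNReal.ofReal_mul hc0,
        div_eq_mul_inv]
    rw [hL]
    -- lower bound each term of the RHS for n < N
    have hterm : ∀ n : ℕ, ENNReal.ofReal (lam n / ∑ i ∈ Finset.range (n + 1), lam i)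
        ≤ ENNReal.ofReal (lam n *
          ((∑ i ∈ Finset.range (n + 1), lam i * (q ^ i / lam i)) /
            ∑ i ∈ Finset.range (n + 1), lam i)) := by
      intro n
      apply ENNReal.ofReal_le_ofReal
      have hG : (1 : ℝ) ≤ ∑ i ∈ Finset.range (n + 1), lam i * (q ^ i / lam i) := by
        have h1 : ∀ i ∈ Finset.range (n + 1), lam i * (q ^ i / lam i) = q ^ i := fun i _ => by
          rw [mul_comm, div_mul_cancel₀ _ (hlam i).ne']
        rw [Finset.sum_congr rfl h1]
        calc (1 : ℝ) = q ^ 0 := by simp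
          _ ≤ ∑ i ∈ Finset.range (n + 1), q ^ i :=
            Finset.single_le_sum (f := fun i => q ^ i)
              (fun i _ => (pow_pos hq0 i).le) (by simp)
      calc lam n / ∑ i ∈ Finset.range (n + 1), lam i
          = lam n * (1 / ∑ i ∈ Finset.range (n + 1), lam i) := by ring
        _ ≤ lam n * ((∑ i ∈ Finset.range (n + 1), lam i * (q ^ i / lam i)) /
            ∑ i ∈ Finset.range (n + 1), lam i) := by
            gcongr
            · exact (hlam n).le
            · exact (hΛ n).le
    calc ENNReal.ofReal (c / θ) < ENNReal.ofReal p := by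
          apply ENNReal.ofReal_lt_ofReal_iff hp0 |>.mpr
          rw [div_lt_iff₀ hθpos]
          linarith [hθp]
      _ = ∑ m ∈ Finset.range N,
            ENNReal.ofReal (lam m / ∑ i ∈ Finset.range (m + 1), lam i) := hsum.symm
      _ ≤ ∑ m ∈ Finset.range N, ENNReal.ofReal (lam m *
            ((∑ i ∈ Finset.range (m + 1), lam i * (q ^ i / lam i)) /
              ∑ i ∈ Finset.range (m + 1), lam i)) :=
          Finset.sum_le_sum fun m _ => hterm m
      _ ≤ ∑' n, ENNReal.ofReal (lam n *
            ((∑ i ∈ Finset.range (n + 1), lam i * (q ^ i / lam i)) /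
              ∑ i ∈ Finset.range (n + 1), lam i)) := ENNReal.sum_le_tsum _
end

section
/- The weighted Hardy constant of the arithmetic mean with respect to weights λ, i.e., the smallest extended real C such that ∑_{n=1}^∞ λ_n·(λ_1x_1+...+λ_nx_n)/Λ_n ≤ C·∑λ_nx_n for all nonnegative x with ∑λ_nx_n < ∞, equals ∑_{m=1}^∞ λ_m/Λ_m. In particular it is finite if and only if ∑ λ_n < ∞. -/
open Filter Topology
open scoped ENNReal

/-- The `λ`-weighted Hardy constant of a weighted mean `M` on a set `I ⊆ ℝ`:
the smallest extended real `C` such that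
`∑ λ_n M((x_1,…,x_n),(λ_1,…,λ_n)) ≤ C ∑ λ_n x_n` for all `x` in `I` with `∑ λ_n x_n < ∞`.
Here `M n x w` denotes the mean of the first `n` entries of `x` with weights `w`. -/
noncomputable def hardyConst (M : ℕ → (ℕ → ℝ) → (ℕ → ℝ) → ℝ) (I : Set ℝ)
    (lam : ℕ → ℝ) : ℝ≥0∞ :=
  sInf {C : ℝ≥0∞ | ∀ x : ℕ → ℝ, (∀ n, x n ∈ I) →
    (∑' n, ENNReal.ofReal (lam n * x n)) ≠ ⊤ →
    ∑' n, ENNReal.ofReal (lam n * M (n + 1) x lam) ≤ C * ∑' n, ENNReal.ofReal (lam n * x n)}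

/-- The weighted arithmetic mean of the first `n` entries. -/
noncomputable def arith : ℕ → (ℕ → ℝ) → (ℕ → ℝ) → ℝ := fun n x w =>
  (∑ i ∈ Finset.range n, w i * x i) / ∑ i ∈ Finset.range n, w i

section Aux
variable (lam : ℕ → ℝ) (hlam : ∀ n, 0 < lam n)

-- the candidate constant
noncomputable def hcT (lam : ℕ → ℝ) : ℝ≥0∞ :=
  ∑' m, ENNReal.ofReal (lam m / ∑ i ∈ Finset.range (m + 1), lam i)

include hlam in
lemma hcS_pos (n : ℕ) : 0 < ∑ i ∈ Finset.range (n + 1), lam i :=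
  Finset.sum_pos (fun i _ => hlam i) Finset.nonempty_range_add_one

include hlam in
lemma hc_upper (x : ℕ → ℝ) (hx : ∀ n, x n ∈ Set.Ici (0:ℝ)) :
    ∑' n, ENNReal.ofReal (lam n * arith (n + 1) x lam) ≤
      hcT lam * ∑' n, ENNReal.ofReal (lam n * x n) := by
  set c : ℕ → ℝ≥0∞ := fun m => ENNReal.ofReal (lam m / ∑ i ∈ Finset.range (m + 1), lam i)
    with hc
  set a : ℕ → ℝ≥0∞ := fun i => ENNReal.ofReal (lam i * x i) with ha
  have step1 : ∀ n, ENNReal.ofReal (lam n * arith (n + 1) x lam) =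
      ∑ i ∈ Finset.range (n + 1), c n * a i := by
    intro n
    have hpos := hcS_pos lam hlam n
    have : lam n * arith (n + 1) x lam =
        (lam n / ∑ i ∈ Finset.range (n + 1), lam i) *
          ∑ i ∈ Finset.range (n + 1), lam i * x i := by
      simp only [arith]; ring
    rw [this, ENNReal.ofReal_mul (div_nonneg (hlam n).le hpos.le),
      ENNReal.ofReal_sum_of_nonneg (fun i _ => mul_nonneg (hlam i).le (hx i)),
      Finset.mul_sum]
  calc ∑' n, ENNReal.ofReal (lam n * arith (n + 1) x lam)
      = ∑' n, ∑ i ∈ Finset.range (n + 1), c n * a i := by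
        exact tsum_congr step1
    _ = ∑' (n : ℕ) (i : ℕ), if i < n + 1 then c n * a i else 0 := by
        refine tsum_congr fun n => ?_
        rw [tsum_eq_sum (s := Finset.range (n + 1))
          (f := fun i => if i < n + 1 then c n * a i else 0)
          (fun i hi => by simp [Finset.mem_range] at hi; simp [hi])]
        exact Finset.sum_congr rfl fun i hi => by simp [Finset.mem_range.mp hi]
    _ = ∑' (i : ℕ) (n : ℕ), if i < n + 1 then c n * a i else 0 := ENNReal.tsum_comm
    _ ≤ ∑' (i : ℕ), a i * hcT lam := by
        refine ENNReal.tsum_le_tsum fun i => ?_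
        calc ∑' (n : ℕ), (if i < n + 1 then c n * a i else 0)
            ≤ ∑' (n : ℕ), c n * a i :=
              ENNReal.tsum_le_tsum fun n => by
                by_cases h : i < n + 1 <;> simp [h]
          _ = a i * hcT lam := by rw [ENNReal.tsum_mul_right, mul_comm]; rfl
    _ = hcT lam * ∑' i, a i := by rw [ENNReal.tsum_mul_right, mul_comm]

include hlam in
lemma hc_lower (C : ℝ≥0∞)
    (hC : ∀ x : ℕ → ℝ, (∀ n, x n ∈ Set.Ici (0:ℝ)) →
      (∑' n, ENNReal.ofReal (lam n * x n)) ≠ ⊤ →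
      ∑' n, ENNReal.ofReal (lam n * arith (n + 1) x lam) ≤ C * ∑' n, ENNReal.ofReal (lam n * x n)) :
    hcT lam ≤ C := by
  set x : ℕ → ℝ := fun n => if n = 0 then 1 else 0 with hxdef
  have hx : ∀ n, x n ∈ Set.Ici (0:ℝ) := fun n => by
    by_cases h : n = 0 <;> simp [hxdef, h]
  have hsum : (∑' n, ENNReal.ofReal (lam n * x n)) = ENNReal.ofReal (lam 0) := by
    have : ∀ n, ENNReal.ofReal (lam n * x n) =
        if n = 0 then ENNReal.ofReal (lam 0) else 0 := by
      intro n; by_cases h : n = 0 <;> simp [hxdef, h]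
    rw [tsum_congr this, tsum_ite_eq]
  have hmean : ∀ n, ENNReal.ofReal (lam n * arith (n + 1) x lam) =
      ENNReal.ofReal (lam 0) *
        ENNReal.ofReal (lam n / ∑ i ∈ Finset.range (n + 1), lam i) := by
    intro n
    have hpos := hcS_pos lam hlam n
    have hnum : (∑ i ∈ Finset.range (n + 1), lam i * x i) = lam 0 := by
      have : ∀ i ∈ Finset.range (n + 1), lam i * x i = if i = 0 then lam 0 else 0 := by
        intro i _; by_cases h : i = 0 <;> simp [hxdef, h]
      rw [Finset.sum_congr rfl this, Finset.sum_ite_eq' (Finset.range (n + 1)) 0 (fun _ => lam 0)]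
      simp
    have : lam n * arith (n + 1) x lam =
        lam 0 * (lam n / ∑ i ∈ Finset.range (n + 1), lam i) := by
      simp only [arith, hnum]; ring
    rw [this, ENNReal.ofReal_mul (hlam 0).le]
  have h := hC x hx (by rw [hsum]; exact ENNReal.ofReal_ne_top)
  rw [hsum, tsum_congr hmean, ENNReal.tsum_mul_left, mul_comm C _] at h
  have h0 : ENNReal.ofReal (lam 0) ≠ 0 := by
    simp [ENNReal.ofReal_eq_zero, not_le, hlam 0]
  exact (ENNReal.mul_le_mul_iff_right h0 ENNReal.ofReal_ne_top).mp h

include hlam in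
lemma hc_fin : hcT lam ≠ ⊤ ↔ Summable lam := by
  constructor
  · intro hT
    rw [hcT] at hT
    by_contra hs
    have htend : Tendsto (fun n => ∑ i ∈ Finset.range n, lam i) atTop atTop :=
      (not_summable_iff_tendsto_nat_atTop_of_nonneg (fun n => (hlam n).le)).mp hs
    -- tail tends to 0
    have htail := ENNReal.tendsto_sum_nat_add _ hT
    have h2 : (0 : ℝ≥0∞) < 1 / 2 := by norm_num
    obtain ⟨N, hN⟩ := ((htail.eventually (gt_mem_nhds h2)).exists)
    -- choose K with S (N + K) ≥ 2 * S N
    set S : ℕ → ℝ := fun n => ∑ i ∈ Finset.range n, lam i with hSdef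
    have hSnn : 0 ≤ S N := Finset.sum_nonneg fun i _ => (hlam i).le
    obtain ⟨M, hM⟩ := (htend.eventually_ge_atTop (2 * S N + lam 0)).exists
    have hMN : ∃ K, 1 ≤ K ∧ 2 * S N ≤ S (N + K) := by
      refine ⟨max (M - N) 1, le_max_right _ _, ?_⟩
      have hle : M ≤ N + max (M - N) 1 := by omega
      have := Finset.sum_le_sum_of_subset_of_nonneg (Finset.range_subset_range.2 hle)
        (fun i _ _ => (hlam i).le)
      have h0 : 0 ≤ lam 0 := (hlam 0).le
      nlinarith [hM]
    obtain ⟨K, hK1, hK⟩ := hMN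
    -- now lower bound the tail by 1/2
    have hSpos : 0 < S (N + K) := by
      have : 0 < S 1 := by simpa [hSdef] using hlam 0
      exact lt_of_lt_of_le this (Finset.sum_le_sum_of_subset_of_nonneg
        (Finset.range_subset_range.2 (by omega)) (fun i _ _ => (hlam i).le))
    have key : (1 / 2 : ℝ≥0∞) ≤ ∑' k, ENNReal.ofReal
        (lam (k + N) / ∑ i ∈ Finset.range (k + N + 1), lam i) := by
      have step : ENNReal.ofReal (∑ k ∈ Finset.range K, lam (k + N) / S (N + K)) ≤
          ∑ k ∈ Finset.range K, ENNReal.ofReal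
            (lam (k + N) / ∑ i ∈ Finset.range (k + N + 1), lam i) := by
        rw [ENNReal.ofReal_sum_of_nonneg (fun k _ => div_nonneg (hlam _).le hSpos.le)]
        refine Finset.sum_le_sum fun k hk => ENNReal.ofReal_le_ofReal ?_
        refine div_le_div_of_nonneg_left (hlam (k + N)).le (hcS_pos lam hlam (k + N)) ?_
        exact Finset.sum_le_sum_of_subset_of_nonneg
          (Finset.range_subset_range.2 (by simp [Finset.mem_range] at hk; omega))
          (fun i _ _ => (hlam i).le)
      have hsumdiv : (∑ k ∈ Finset.range K, lam (k + N) / S (N + K)) =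
          (S (N + K) - S N) / S (N + K) := by
        rw [← Finset.sum_div]
        congr 1
        have : S (N + K) = S N + ∑ k ∈ Finset.range K, lam (k + N) := by
          simp only [hSdef]
          rw [Finset.sum_range_add]
          congr 1
          exact Finset.sum_congr rfl fun k _ => by rw [add_comm]
        linarith [this]
      have hhalf : (1 / 2 : ℝ) ≤ (S (N + K) - S N) / S (N + K) := by
        rw [le_div_iff₀ hSpos]; nlinarith
      calc (1 / 2 : ℝ≥0∞) = ENNReal.ofReal (1 / 2) := by
            rw [ENNReal.ofReal_div_of_pos (by norm_num)]; simp
        _ ≤ ENNReal.ofReal ((S (N + K) - S N) / S (N + K)) :=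
            ENNReal.ofReal_le_ofReal hhalf
        _ ≤ _ := by
            refine le_trans (by rw [hsumdiv]) (le_trans step ?_)
            exact ENNReal.sum_le_tsum _
    exact absurd (lt_of_le_of_lt key hN) (by norm_num)
  · intro hs
    have hbound : ∀ m, ENNReal.ofReal (lam m / ∑ i ∈ Finset.range (m + 1), lam i) ≤
        ENNReal.ofReal ((lam 0)⁻¹) * ENNReal.ofReal (lam m) := by
      intro m
      rw [← ENNReal.ofReal_mul (inv_nonneg.mpr (hlam 0).le)]
      refine ENNReal.ofReal_le_ofReal ?_
      rw [← div_eq_inv_mul]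
      refine div_le_div_of_nonneg_left (hlam m).le (hlam 0) ?_
      have h1 : (∑ i ∈ Finset.range 1, lam i) ≤ ∑ i ∈ Finset.range (m + 1), lam i :=
        Finset.sum_le_sum_of_subset_of_nonneg
          (Finset.range_subset_range.2 (by omega)) (fun i _ _ => (hlam i).le)
      simpa using h1
    have hle : hcT lam ≤ ENNReal.ofReal ((lam 0)⁻¹) * ∑' m, ENNReal.ofReal (lam m) := by
      unfold hcT
      calc (∑' m, ENNReal.ofReal (lam m / ∑ i ∈ Finset.range (m + 1), lam i))
          ≤ ∑' m, ENNReal.ofReal ((lam 0)⁻¹) * ENNReal.ofReal (lam m) :=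
            ENNReal.tsum_le_tsum hbound
        _ = _ := ENNReal.tsum_mul_left
    refine ne_top_of_le_ne_top ?_ hle
    rw [← ENNReal.ofReal_tsum_of_nonneg (fun n => (hlam n).le) hs]
    exact ENNReal.mul_ne_top ENNReal.ofReal_ne_top ENNReal.ofReal_ne_top
end Aux

/-- the weighted Hardy constant of the arithmetic mean equals `∑ λ_m/Λ_m`,
and it is finite if and only if `∑ λ_n < ∞`. -/
theorem hardyConst_arith (lam : ℕ → ℝ) (hlam : ∀ n, 0 < lam n) :
    hardyConst arith (Set.Ici 0) lam =
        ∑' m, ENNReal.ofReal (lam m / ∑ i ∈ Finset.range (m + 1), lam i) ∧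
      (hardyConst arith (Set.Ici 0) lam ≠ ⊤ ↔ Summable lam) := by
  have heq : hardyConst arith (Set.Ici 0) lam = hcT lam := by
    unfold hardyConst
    refine le_antisymm (sInf_le fun x hx _ => hc_upper lam hlam x hx)
      (le_sInf fun C hC => hc_lower lam hlam C hC)
  exact ⟨heq, by rw [heq]; exact hc_fin lam hlam⟩
end

section
/- Let λ_n = 2^{-n} and, for each k, let ψ^(k) be the sequence equal to λ except that its k-th entry is 1. Then ψ^(k) → λ pointwise, the weighted Hardy constant of the arithmetic mean satisfies H_A(λ) = ∑_{m=1}^∞ 1/(2^m - 1) (the Erdős–Borwein constant E), and lim_{k→∞} H_A(ψ^(k)) = E + 1/2 > H_A(λ). Consequently the map λ ↦ H_A(λ) is not continuous in the pointwise topology. -/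
open Filter Topology
open scoped ENNReal

/-- The weights `λ_n = 2^{-n}` (indexed from `0`, so `lam7 i = 2^{-(i+1)}`). -/
noncomputable def lam7 : ℕ → ℝ := fun i => (1 / 2 : ℝ) ^ (i + 1)

/-- The perturbed weights `ψ^{(k)}`: equal to `λ` except the `k`-th entry is `1`. -/
noncomputable def psi7 : ℕ → ℕ → ℝ := fun k i => if i = k then 1 else (1 / 2 : ℝ) ^ (i + 1)

/-- The Erdős–Borwein constant `E = ∑_{m=1}^∞ 1/(2^m - 1)`. -/
noncomputable def erdosBorwein : ℝ≥0∞ :=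
  ∑' m : ℕ, ENNReal.ofReal (1 / ((2 : ℝ) ^ (m + 1) - 1))

/-! ### Auxiliary lemmas -/

lemma hardy_eq_aux (μ : ℕ → ℝ) (hμ : ∀ i, 0 < μ i) (C : ℝ≥0∞)
    (hC : ∀ x : ℕ → ℝ, (∀ n, x n ∈ Set.Ici (0:ℝ)) →
      (∑' n, ENNReal.ofReal (μ n * x n)) ≠ ⊤ →
      ∑' n, ENNReal.ofReal (μ n * ((∑ i ∈ Finset.range (n+1), μ i * x i) / ∑ i ∈ Finset.range (n+1), μ i))
        ≤ C * ∑' n, ENNReal.ofReal (μ n * x n)) :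
    (∑' n, ENNReal.ofReal (μ n / ∑ i ∈ Finset.range (n+1), μ i)) ≤ C := by
  have hM : ∀ n, 0 < ∑ i ∈ Finset.range (n+1), μ i :=
    fun n => Finset.sum_pos (fun i _ => hμ i) ⟨0, Finset.mem_range.mpr (Nat.succ_pos n)⟩
  set x : ℕ → ℝ := fun i => if i = 0 then 1 else 0 with hxdef
  have hx : ∀ n, x n ∈ Set.Ici (0:ℝ) := by
    intro n; simp only [hxdef, Set.mem_Ici]; split <;> norm_num
  have hsum : (∑' n, ENNReal.ofReal (μ n * x n)) = ENNReal.ofReal (μ 0) := by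
    rw [tsum_eq_single 0]
    · simp [hxdef]
    · intro b hb; simp [hxdef, hb]
  have hnum : ∀ n, (∑ i ∈ Finset.range (n+1), μ i * x i) = μ 0 := by
    intro n
    rw [Finset.sum_congr rfl (fun i _ => ?_)]
    · rw [Finset.sum_ite_eq' (Finset.range (n+1)) 0 μ]
      simp
    · show μ i * x i = if i = 0 then μ i else 0
      simp only [hxdef]; split <;> ring
  have key := hC x hx (by rw [hsum]; exact ENNReal.ofReal_ne_top)
  rw [hsum] at key
  have hlhs : (∑' n, ENNReal.ofReal (μ n * ((∑ i ∈ Finset.range (n+1), μ i * x i) / ∑ i ∈ Finset.range (n+1), μ i)))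
      = ENNReal.ofReal (μ 0) * ∑' n, ENNReal.ofReal (μ n / ∑ i ∈ Finset.range (n+1), μ i) := by
    rw [← ENNReal.tsum_mul_left]
    refine tsum_congr fun n => ?_
    rw [hnum n, ← ENNReal.ofReal_mul (hμ 0).le]
    congr 1; ring
  rw [hlhs, mul_comm C _] at key
  exact (ENNReal.mul_le_mul_iff_right (ENNReal.ofReal_pos.mpr (hμ 0)).ne' ENNReal.ofReal_ne_top).mp key

lemma hardy_mem_aux (μ : ℕ → ℝ) (hμ : ∀ i, 0 < μ i)
    (x : ℕ → ℝ) (hx : ∀ n, x n ∈ Set.Ici (0:ℝ)) :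
    ∑' n, ENNReal.ofReal (μ n * ((∑ i ∈ Finset.range (n+1), μ i * x i) / ∑ i ∈ Finset.range (n+1), μ i))
      ≤ (∑' n, ENNReal.ofReal (μ n / ∑ i ∈ Finset.range (n+1), μ i)) * ∑' n, ENNReal.ofReal (μ n * x n) := by
  have hM : ∀ n, 0 < ∑ i ∈ Finset.range (n+1), μ i :=
    fun n => Finset.sum_pos (fun i _ => hμ i) ⟨0, Finset.mem_range.mpr (Nat.succ_pos n)⟩
  set g : ℕ → ℕ → ℝ≥0∞ := fun n i =>
    (if i ≤ n then ENNReal.ofReal (μ n / ∑ j ∈ Finset.range (n+1), μ j) else 0)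
      * ENNReal.ofReal (μ i * x i) with hg
  have step1 : ∀ n, ENNReal.ofReal (μ n * ((∑ i ∈ Finset.range (n+1), μ i * x i) / ∑ i ∈ Finset.range (n+1), μ i))
      = ∑' i, g n i := by
    intro n
    rw [tsum_eq_sum (s := Finset.range (n+1)) (fun b hb => ?_)]
    · have : μ n * ((∑ i ∈ Finset.range (n+1), μ i * x i) / ∑ i ∈ Finset.range (n+1), μ i)
          = ∑ i ∈ Finset.range (n+1), (μ n / ∑ j ∈ Finset.range (n+1), μ j) * (μ i * x i) := by
        rw [← Finset.mul_sum]; ring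
      rw [this, ENNReal.ofReal_sum_of_nonneg (fun i hi => ?_)]
      · refine Finset.sum_congr rfl fun i hi => ?_
        rw [hg]
        simp only [if_pos (Nat.lt_succ_iff.mp (Finset.mem_range.mp hi))]
        rw [ENNReal.ofReal_mul (div_nonneg (hμ n).le (hM n).le)]
      · have h1 := hx i
        have h2 := (hμ n).le
        have h3 := (hM n).le
        have h4 := (hμ i).le
        exact mul_nonneg (div_nonneg h2 h3) (mul_nonneg h4 h1)
    · have hbn : ¬ b ≤ n := fun h => hb (Finset.mem_range.mpr (Nat.lt_succ_iff.mpr h))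
      rw [hg]; simp only [if_neg hbn, zero_mul]
  calc ∑' n, ENNReal.ofReal (μ n * ((∑ i ∈ Finset.range (n+1), μ i * x i) / ∑ i ∈ Finset.range (n+1), μ i))
      = ∑' n, ∑' i, g n i := tsum_congr step1
    _ = ∑' i, ∑' n, g n i := ENNReal.tsum_comm
    _ ≤ ∑' i, (∑' n, ENNReal.ofReal (μ n / ∑ j ∈ Finset.range (n+1), μ j)) * ENNReal.ofReal (μ i * x i) := by
        refine ENNReal.tsum_le_tsum fun i => ?_
        rw [hg, ENNReal.tsum_mul_right]
        refine mul_le_mul_left (ENNReal.tsum_le_tsum fun n => ?_) _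
        split
        · exact le_rfl
        · exact zero_le
    _ = (∑' n, ENNReal.ofReal (μ n / ∑ i ∈ Finset.range (n+1), μ i)) * ∑' n, ENNReal.ofReal (μ n * x n) :=
        ENNReal.tsum_mul_left

lemma hardy_eq (μ : ℕ → ℝ) (hμ : ∀ i, 0 < μ i) :
    hardyConst arith (Set.Ici 0) μ
      = ∑' n, ENNReal.ofReal (μ n / ∑ i ∈ Finset.range (n+1), μ i) := by
  unfold hardyConst arith
  apply le_antisymm
  · exact sInf_le fun x hx _ => hardy_mem_aux μ hμ x hx
  · exact le_sInf fun C hC => hardy_eq_aux μ hμ C hC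

lemma geom_partial (n : ℕ) : ∑ i ∈ Finset.range n, (1/2:ℝ)^(i+1) = 1 - (1/2:ℝ)^n := by
  induction n with
  | zero => simp
  | succ m ih => rw [Finset.sum_range_succ, ih]; ring

lemma lam7_term (n : ℕ) :
    ((1/2:ℝ)^(n+1)) / (1 - (1/2:ℝ)^(n+1)) = 1 / ((2:ℝ)^(n+1) - 1) := by
  have h1 : (1:ℝ) < 2^(n+1) := one_lt_pow₀ one_lt_two (Nat.succ_ne_zero n)
  have h2 : (2:ℝ)^(n+1) ≠ 0 := by positivity
  rw [one_div, inv_pow]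
  have h3 : (1:ℝ) - (2^(n+1))⁻¹ ≠ 0 := by
    have hinv : ((2:ℝ)^(n+1))⁻¹ < 1 := by
      rw [inv_lt_one_iff₀]; right; exact h1
    nlinarith
  rw [div_eq_div_iff h3 (by nlinarith)]
  have h2' : ((2:ℝ)^(n+1))⁻¹ * (2:ℝ)^(n+1) = 1 := inv_mul_cancel₀ h2
  nlinarith [h2']

lemma psi7_pos (k i : ℕ) : 0 < psi7 k i := by
  unfold psi7; split <;> positivity

lemma psi7_sum (k m : ℕ) : ∑ i ∈ Finset.range m, psi7 k i
    = (1 - (1/2:ℝ)^m) + (if k < m then 1 - (1/2:ℝ)^(k+1) else 0) := by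
  have : ∀ i, psi7 k i = (1/2:ℝ)^(i+1) + (if i = k then 1 - (1/2:ℝ)^(k+1) else 0) := by
    intro i; unfold psi7; by_cases h : i = k <;> simp [h]
  simp_rw [this]
  rw [Finset.sum_add_distrib, geom_partial, Finset.sum_ite_eq' (Finset.range m) k
    (fun _ => 1 - (1/2:ℝ)^(k+1))]
  simp [Finset.mem_range]

lemma psi7_term_lt (k n : ℕ) (h : n < k) :
    psi7 k n / ∑ i ∈ Finset.range (n+1), psi7 k i = 1 / ((2:ℝ)^(n+1) - 1) := by
  rw [psi7_sum, if_neg (by omega)]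
  unfold psi7
  rw [if_neg (by omega), add_zero]
  exact lam7_term n

lemma psi7_term_eq (k : ℕ) :
    psi7 k k / ∑ i ∈ Finset.range (k+1), psi7 k i = 1 / (2 - (1/2:ℝ)^k) := by
  rw [psi7_sum, if_pos (by omega)]
  unfold psi7
  rw [if_pos rfl]
  have : (1:ℝ) - (1/2)^(k+1) + (1 - (1/2)^(k+1)) = 2 - (1/2:ℝ)^k := by
    rw [pow_succ]; ring
  rw [this]

lemma psi7_denom_pos (k n : ℕ) : 0 < ∑ i ∈ Finset.range (n+1), psi7 k i :=
  Finset.sum_pos (fun i _ => psi7_pos k i) ⟨0, Finset.mem_range.mpr (Nat.succ_pos n)⟩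

lemma psi7_term_gt (k n : ℕ) (h : k < n) :
    psi7 k n / ∑ i ∈ Finset.range (n+1), psi7 k i ≤ (1/2:ℝ)^(n+1) := by
  have hden : (1:ℝ) ≤ ∑ i ∈ Finset.range (n+1), psi7 k i := by
    rw [psi7_sum, if_pos (by omega)]
    have h1 : (1/2:ℝ)^(n+1) ≤ 1/2 := by
      apply pow_le_of_le_one (by norm_num) (by norm_num) (by omega)
    have h2 : (1/2:ℝ)^(k+1) ≤ 1/2 := by
      apply pow_le_of_le_one (by norm_num) (by norm_num) (by omega)
    linarith
  have hnum : psi7 k n = (1/2:ℝ)^(n+1) := by unfold psi7; rw [if_neg (by omega)]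
  rw [hnum]
  calc (1/2:ℝ)^(n+1) / ∑ i ∈ Finset.range (n+1), psi7 k i
      ≤ (1/2:ℝ)^(n+1) / 1 := by
        apply div_le_div_of_nonneg_left (by positivity) one_pos hden
    _ = (1/2:ℝ)^(n+1) := div_one _

lemma ofReal_half : ENNReal.ofReal (1/2 : ℝ) = (1/2 : ℝ≥0∞) := by
  rw [ENNReal.ofReal_div_of_pos (by norm_num)]
  norm_num

lemma Lg2 : Filter.Tendsto (fun k => ENNReal.ofReal (1/(2-(1/2:ℝ)^k))) atTop (𝓝 (1/2 : ℝ≥0∞)) := by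
  have h0 : Filter.Tendsto (fun k : ℕ => (1/2:ℝ)^k) atTop (𝓝 0) :=
    tendsto_pow_atTop_nhds_zero_of_lt_one (by norm_num) (by norm_num)
  have hr : Filter.Tendsto (fun k : ℕ => 1/(2-(1/2:ℝ)^k)) atTop (𝓝 (1/2 : ℝ)) := by
    have := ((tendsto_const_nhds : Filter.Tendsto (fun _ : ℕ => (1:ℝ)) atTop (𝓝 1))).div
      (((tendsto_const_nhds : Filter.Tendsto (fun _ : ℕ => (2:ℝ)) atTop (𝓝 2))).sub h0)
      (by norm_num : (2:ℝ) - 0 ≠ 0)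
    have heq : (fun k : ℕ => 1/(2-(1/2:ℝ)^k)) = (fun _ : ℕ => (1:ℝ)) / fun k : ℕ => 2 - (1/2:ℝ)^k := rfl
    rw [heq]
    simpa using this
  have := (ENNReal.continuous_ofReal.tendsto (1/2 : ℝ)).comp hr
  rwa [ofReal_half] at this

lemma Ltail : Filter.Tendsto (fun k => ENNReal.ofReal ((1/2:ℝ)^(k+1))) atTop (𝓝 0) := by
  have h0 : Filter.Tendsto (fun k : ℕ => (1/2:ℝ)^(k+1)) atTop (𝓝 0) :=
    (tendsto_pow_atTop_nhds_zero_of_lt_one (r := (1/2:ℝ)) (by norm_num) (by norm_num)).comp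
      (tendsto_add_atTop_nat 1)
  have := (ENNReal.continuous_ofReal.tendsto (0 : ℝ)).comp h0
  rw [ENNReal.ofReal_zero] at this
  exact this

lemma Lg1 : Filter.Tendsto (fun k => ∑ n ∈ Finset.range k, ENNReal.ofReal (1/((2:ℝ)^(n+1)-1)))
    atTop (𝓝 erdosBorwein) := ENNReal.tendsto_nat_tsum _

lemma tail_geom (k : ℕ) :
    ∑' n : ℕ, ENNReal.ofReal ((1/2:ℝ)^(n+(k+1)+1)) = ENNReal.ofReal ((1/2:ℝ)^(k+1)) := by
  have heq : (fun n : ℕ => (1/2:ℝ)^(n+(k+1)+1)) = fun n => (1/2:ℝ)^n * (1/2:ℝ)^(k+2) := by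
    funext n; rw [← pow_add]; ring_nf
  have hs : Summable (fun n : ℕ => (1/2:ℝ)^(n+(k+1)+1)) := by
    rw [heq]
    exact (summable_geometric_of_lt_one (by norm_num) (by norm_num)).mul_right _
  rw [← ENNReal.ofReal_tsum_of_nonneg (fun n => by positivity) hs]
  congr 1
  rw [heq, tsum_mul_right, tsum_geometric_of_lt_one (by norm_num) (by norm_num)]
  norm_num
  rw [pow_succ]
  ring

/-- The exact value of the perturbed Hardy constant tsum bounds. -/
noncomputable def Spsi (k : ℕ) : ℝ≥0∞ :=
  ∑' n, ENNReal.ofReal (psi7 k n / ∑ i ∈ Finset.range (n+1), psi7 k i)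

noncomputable def gLow (k : ℕ) : ℝ≥0∞ :=
  (∑ n ∈ Finset.range k, ENNReal.ofReal (1/((2:ℝ)^(n+1)-1))) + ENNReal.ofReal (1/(2-(1/2:ℝ)^k))

lemma front_sum (k : ℕ) :
    ∑ n ∈ Finset.range (k+1), ENNReal.ofReal (psi7 k n / ∑ i ∈ Finset.range (n+1), psi7 k i)
      = gLow k := by
  rw [Finset.sum_range_succ, psi7_term_eq]
  unfold gLow
  congr 1
  exact Finset.sum_congr rfl fun n hn =>
    congrArg _ (psi7_term_lt k n (Finset.mem_range.mp hn))

lemma Spsi_lower (k : ℕ) : gLow k ≤ Spsi k := by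
  rw [← front_sum k]
  exact ENNReal.sum_le_tsum _

lemma Spsi_upper (k : ℕ) : Spsi k ≤ gLow k + ENNReal.ofReal ((1/2:ℝ)^(k+1)) := by
  unfold Spsi
  set f : ℕ → ℝ≥0∞ := fun n => ENNReal.ofReal (psi7 k n / ∑ i ∈ Finset.range (n+1), psi7 k i) with hf
  have hsplit : ∑' n, f n = (∑ i ∈ Finset.range (k+1), f i) + ∑' n, f (n + (k+1)) :=
    ((ENNReal.summable (f := fun n => f (n + (k+1)))).hasSum.sum_range_add).tsum_eq
  rw [hsplit, front_sum k]
  refine add_le_add_right ?_ _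
  calc ∑' n, f (n + (k+1))
      ≤ ∑' n : ℕ, ENNReal.ofReal ((1/2:ℝ)^(n+(k+1)+1)) :=
        ENNReal.tsum_le_tsum fun n =>
          ENNReal.ofReal_le_ofReal (psi7_term_gt k (n+(k+1)) (by omega))
    _ = ENNReal.ofReal ((1/2:ℝ)^(k+1)) := tail_geom k

lemma erdosBorwein_ne_top : erdosBorwein ≠ ⊤ := by
  have hb : erdosBorwein ≤ ∑' m : ℕ, ENNReal.ofReal ((1/2:ℝ)^m) := by
    refine ENNReal.tsum_le_tsum fun m => ENNReal.ofReal_le_ofReal ?_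
    have h1 : (2:ℝ)^m ≤ 2^(m+1) - 1 := by
      have : (2:ℝ)^(m+1) = 2 * 2^m := by rw [pow_succ]; ring
      have h2 : (1:ℝ) ≤ 2^m := one_le_pow₀ (by norm_num)
      linarith
    have h0 : (0:ℝ) < 2^m := by positivity
    calc (1:ℝ) / (2^(m+1) - 1) ≤ 1 / 2^m := by
          apply div_le_div_of_nonneg_left (by norm_num) h0 h1
      _ = (1/2:ℝ)^m := by rw [div_pow, one_pow]
  have hfin : (∑' m : ℕ, ENNReal.ofReal ((1/2:ℝ)^m)) ≠ ⊤ := by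
    rw [← ENNReal.ofReal_tsum_of_nonneg (fun n => by positivity)
      (summable_geometric_of_lt_one (by norm_num) (by norm_num))]
    exact ENNReal.ofReal_ne_top
  exact fun h => hfin (top_le_iff.mp (h ▸ hb))

theorem hardyConst_arith_not_continuous :
    (∀ i, Tendsto (fun k => psi7 k i) atTop (𝓝 (lam7 i))) ∧
      hardyConst arith (Set.Ici 0) lam7 = erdosBorwein ∧
      Tendsto (fun k => hardyConst arith (Set.Ici 0) (psi7 k)) atTop
        (𝓝 (erdosBorwein + 1 / 2)) ∧
      hardyConst arith (Set.Ici 0) lam7 < erdosBorwein + 1 / 2 := by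
  have hlam_pos : ∀ i, 0 < lam7 i := fun i => by unfold lam7; positivity
  have hlam : hardyConst arith (Set.Ici 0) lam7 = erdosBorwein := by
    rw [hardy_eq lam7 hlam_pos]
    refine tsum_congr fun n => ?_
    congr 1
    show lam7 n / ∑ i ∈ Finset.range (n+1), lam7 i = 1 / ((2:ℝ)^(n+1) - 1)
    unfold lam7
    rw [geom_partial (n+1)]
    exact lam7_term n
  refine ⟨?_, hlam, ?_, ?_⟩
  · intro i
    have hev : (fun _ : ℕ => lam7 i) =ᶠ[atTop] (fun k => psi7 k i) := by
      filter_upwards [eventually_ge_atTop (i+1)] with k hk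
      unfold psi7 lam7
      rw [if_neg (by omega)]
    exact Filter.Tendsto.congr' hev tendsto_const_nhds
  · have hval : ∀ k, hardyConst arith (Set.Ici 0) (psi7 k) = Spsi k :=
      fun k => hardy_eq (psi7 k) (psi7_pos k)
    simp_rw [hval]
    have hg : Filter.Tendsto gLow atTop (𝓝 (erdosBorwein + 1/2)) := Lg1.add Lg2
    have hup : Filter.Tendsto (fun k => gLow k + ENNReal.ofReal ((1/2:ℝ)^(k+1))) atTop
        (𝓝 (erdosBorwein + 1/2)) := by
      have := hg.add Ltail
      simpa using this
    exact tendsto_of_tendsto_of_tendsto_of_le_of_le hg hup Spsi_lower Spsi_upper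
  · rw [hlam]
    exact ENNReal.lt_add_right erdosBorwein_ne_top (by norm_num)
end

section
/- For the arithmetic mean, the partition-ordering monotonicity holds explicitly: if ψ ≺ λ (i.e., there is a strictly increasing sequence 0 = n_0 < n_1 < n_2 < ... with ψ_k = λ_{n_{k-1}+1} + ... + λ_{n_k}), then ∑_{k=1}^∞ ψ_k/Ψ_k ≤ ∑_{n=1}^∞ λ_n/Λ_n, where Ψ_k and Λ_n denote the respective partial sums. -/
open Filter Topology
open scoped ENNReal

lemma block_sum_telescope {M : Type*} [AddCommMonoid M] (nk : ℕ → ℕ) (h0 : nk 0 = 0)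
    (hmono : StrictMono nk) (g : ℕ → M) (K : ℕ) :
    ∑ k ∈ Finset.range K, ∑ n ∈ Finset.Ico (nk k) (nk (k + 1)), g n
      = ∑ n ∈ Finset.range (nk K), g n := by
  induction K with
  | zero => simp [h0]
  | succ m ih =>
    rw [Finset.sum_range_succ, ih, Finset.range_eq_Ico, Finset.range_eq_Ico]
    exact Finset.sum_Ico_consecutive g (Nat.zero_le _) (hmono (Nat.lt_succ_self m)).le

/-- partition-ordering monotonicity for the arithmetic mean: if `ψ` is obtained
from `λ` by summing consecutive blocks determined by a strictly increasing sequence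
`0 = n_0 < n_1 < ...`, then `∑ ψ_k/Ψ_k ≤ ∑ λ_n/Λ_n`. -/
theorem arith_hardy_partition_monotone (lam : ℕ → ℝ) (hlam : ∀ n, 0 < lam n)
    (nk : ℕ → ℕ) (h0 : nk 0 = 0) (hmono : StrictMono nk)
    (psi : ℕ → ℝ)
    (hpsi : ∀ k, psi k = ∑ i ∈ Finset.Ico (nk k) (nk (k + 1)), lam i) :
    ∑' k, ENNReal.ofReal (psi k / ∑ i ∈ Finset.range (k + 1), psi i) ≤
      ∑' n, ENNReal.ofReal (lam n / ∑ i ∈ Finset.range (n + 1), lam i) := by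
  have hΛpos : ∀ n, 0 < ∑ i ∈ Finset.range (n + 1), lam i := fun n =>
    Finset.sum_pos (fun i _ => hlam i) (by simp)
  have hpsum : ∀ k, ∑ i ∈ Finset.range (k + 1), psi i
      = ∑ n ∈ Finset.range (nk (k + 1)), lam n := by
    intro k
    calc ∑ i ∈ Finset.range (k + 1), psi i
        = ∑ i ∈ Finset.range (k + 1), ∑ n ∈ Finset.Ico (nk i) (nk (i + 1)), lam n := by
          simp only [hpsi]
      _ = _ := block_sum_telescope nk h0 hmono lam (k + 1)
  set f : ℕ → ENNReal := fun n =>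
    ENNReal.ofReal (lam n / ∑ i ∈ Finset.range (n + 1), lam i) with hf
  have step : ∀ k, ENNReal.ofReal (psi k / ∑ i ∈ Finset.range (k + 1), psi i)
      ≤ ∑ n ∈ Finset.Ico (nk k) (nk (k + 1)), f n := by
    intro k
    have hΨpos : 0 < ∑ n ∈ Finset.range (nk (k + 1)), lam n := by
      apply Finset.sum_pos (fun i _ => hlam i)
      have : 0 < nk (k + 1) := h0 ▸ hmono (Nat.succ_pos k)
      rw [Finset.nonempty_range_iff]
      omega
    have hreal : psi k / ∑ i ∈ Finset.range (k + 1), psi i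
        ≤ ∑ n ∈ Finset.Ico (nk k) (nk (k + 1)),
            lam n / ∑ i ∈ Finset.range (n + 1), lam i := by
      rw [hpsum k, hpsi k, Finset.sum_div]
      apply Finset.sum_le_sum
      intro n hn
      have hn' : n + 1 ≤ nk (k + 1) := Nat.succ_le_of_lt (Finset.mem_Ico.mp hn).2
      have hle : ∑ i ∈ Finset.range (n + 1), lam i ≤ ∑ i ∈ Finset.range (nk (k + 1)), lam i :=
        Finset.sum_le_sum_of_subset_of_nonneg
          (Finset.range_subset_range.mpr hn') (fun i _ _ => (hlam i).le)
      exact div_le_div_of_nonneg_left (hlam n).le (hΛpos n) hle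
    calc ENNReal.ofReal (psi k / ∑ i ∈ Finset.range (k + 1), psi i)
        ≤ ENNReal.ofReal (∑ n ∈ Finset.Ico (nk k) (nk (k + 1)),
            lam n / ∑ i ∈ Finset.range (n + 1), lam i) := ENNReal.ofReal_le_ofReal hreal
      _ = ∑ n ∈ Finset.Ico (nk k) (nk (k + 1)), f n := by
          rw [ENNReal.ofReal_sum_of_nonneg]
          intro n _
          exact div_nonneg (hlam n).le (hΛpos n).le
  calc ∑' k, ENNReal.ofReal (psi k / ∑ i ∈ Finset.range (k + 1), psi i)
      ≤ ∑' k, ∑ n ∈ Finset.Ico (nk k) (nk (k + 1)), f n := ENNReal.tsum_le_tsum step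
    _ ≤ ∑' n, f n := by
        rw [ENNReal.tsum_eq_iSup_nat]
        apply iSup_le
        intro K
        rw [block_sum_telescope nk h0 hmono f K]
        exact ENNReal.sum_le_tsum _
end

section
/- For the arithmetic mean, the map C(q) := H_A((q^n)_{n=1}^∞) = ∑_{m=1}^∞ q^m·(1-q)/(q(1-q^m)) (for q ∈ (0,1)) satisfies C(q^r) ≤ C(q) for every q ∈ (0,1) and every positive integer r. -/
open scoped ENNReal

/-- for `q ∈ (0,1)`, the map
`C(q) = H_A((q^n)_n) = ∑_{m=1}^∞ (1-q) q^{m-1}/(1-q^m)` satisfies `C(q^r) ≤ C(q)`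
for every positive integer `r`. -/
theorem geometric_hardy_const_power_mono (q : ℝ) (hq0 : 0 < q) (hq1 : q < 1)
    (r : ℕ) (hr : 1 ≤ r) :
    ∑' m : ℕ, ENNReal.ofReal ((1 - (q ^ r)) * (q ^ r) ^ m / (1 - (q ^ r) ^ (m + 1))) ≤
      ∑' m : ℕ, ENNReal.ofReal ((1 - q) * q ^ m / (1 - q ^ (m + 1))) := by
  haveI : NeZero r := ⟨by omega⟩
  have hqle : (0:ℝ) ≤ q := hq0.le
  have hden : ∀ k : ℕ, 0 < 1 - q ^ (k + 1) := fun k =>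
    sub_pos.mpr (pow_lt_one₀ hqle hq1 (Nat.succ_ne_zero k))
  have hnn : ∀ k : ℕ, 0 ≤ (1 - q) * q ^ k / (1 - q ^ (k + 1)) := fun k =>
    div_nonneg (mul_nonneg (sub_pos.mpr hq1).le (pow_nonneg hqle _)) (hden k).le
  -- rewrite RHS as double sum over blocks of length r
  have hre : (∑' m : ℕ, ENNReal.ofReal ((1 - q) * q ^ m / (1 - q ^ (m + 1))))
      = ∑' m : ℕ, ∑ j ∈ Finset.range r,
          ENNReal.ofReal ((1 - q) * q ^ (m * r + j) / (1 - q ^ (m * r + j + 1))) := by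
    rw [← (Nat.divModEquiv r).symm.tsum_eq
        (fun k => ENNReal.ofReal ((1 - q) * q ^ k / (1 - q ^ (k + 1)))), ENNReal.tsum_prod']
    refine tsum_congr fun m => ?_
    rw [tsum_fintype]
    rw [← Fin.sum_univ_eq_sum_range (fun j =>
      ENNReal.ofReal ((1 - q) * q ^ (m * r + j) / (1 - q ^ (m * r + j + 1)))) r]
    exact Finset.sum_congr rfl fun j _ => by simp [Nat.divModEquiv]
  rw [hre]
  refine ENNReal.tsum_le_tsum fun m => ?_
  -- per-block inequality
  have hsum : (1 - q ^ r) * (q ^ r) ^ m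
      = ∑ j ∈ Finset.range r, (1 - q) * q ^ (m * r + j) := by
    have hg : ∑ j ∈ Finset.range r, q ^ j = (q ^ r - 1) / (q - 1) := geom_sum_eq hq1.ne r
    have h2 : ∑ j ∈ Finset.range r, (1 - q) * q ^ (m * r + j)
        = (1 - q) * q ^ (m * r) * ∑ j ∈ Finset.range r, q ^ j := by
      rw [Finset.mul_sum]; exact Finset.sum_congr rfl fun j _ => by rw [pow_add]; ring
    have h3 : q - 1 ≠ 0 := sub_ne_zero.mpr hq1.ne
    rw [h2, hg, ← pow_mul, mul_comm m r]
    field_simp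
    ring
  have hnum : (1 - q ^ r) * (q ^ r) ^ m / (1 - (q ^ r) ^ (m + 1))
      = ∑ j ∈ Finset.range r, (1 - q) * q ^ (m * r + j) / (1 - q ^ (m * r + r)) := by
    rw [← Finset.sum_div, ← hsum]
    congr 2
    rw [← pow_mul]
    ring_nf
  calc ENNReal.ofReal ((1 - q ^ r) * (q ^ r) ^ m / (1 - (q ^ r) ^ (m + 1)))
      = ∑ j ∈ Finset.range r,
          ENNReal.ofReal ((1 - q) * q ^ (m * r + j) / (1 - q ^ (m * r + r))) := by
        rw [hnum, ENNReal.ofReal_sum_of_nonneg]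
        intro j _
        refine div_nonneg (mul_nonneg (sub_pos.mpr hq1).le (pow_nonneg hqle _)) ?_
        have := hden (m * r + r - 1)
        rw [Nat.sub_add_cancel (by omega : 1 ≤ m * r + r)] at this
        exact this.le
    _ ≤ ∑ j ∈ Finset.range r,
          ENNReal.ofReal ((1 - q) * q ^ (m * r + j) / (1 - q ^ (m * r + j + 1))) := by
        refine Finset.sum_le_sum fun j hj => ENNReal.ofReal_le_ofReal ?_
        have hjr : j + 1 ≤ r := Finset.mem_range.mp hj
        have h1 : q ^ (m * r + r) ≤ q ^ (m * r + j + 1) :=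
          pow_le_pow_of_le_one hqle hq1.le (by omega)
        exact div_le_div_of_nonneg_left
          (mul_nonneg (sub_pos.mpr hq1).le (pow_nonneg hqle _)) (hden _)
          (by linarith)
end

section
/- Let M be a symmetric, monotone, Jensen-concave weighted mean on I with integer weights. For every N, integer weights λ ∈ (ℤ_{>0})^N, and x ∈ I^N, define the sequence s of length Λ_N by repeating x_n exactly λ_n times, let s* be its nonincreasing rearrangement, and set y_n := (s*_{Λ_{n-1}+1} + ... + s*_{Λ_n})/λ_n. Then y is nonincreasing, ∑_{n=1}^N λ_n y_n = ∑_{n=1}^N λ_n x_n, and M((x_1,...,x_n),(λ_1,...,λ_n)) ≤ M((y_1,...,y_n),(λ_1,...,λ_n)) for every n ∈ {1,...,N}. -/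
open Filter Topology

/-- Convex combination lemma: average of `m` functions, each with `M`-value `≥ v`,
has `M`-value `≥ v`. -/
private lemma avg_lemma_aux (M : ℕ → (ℕ → ℝ) → (ℕ → ℝ) → ℝ)
    (hconc : ∀ n (w x y : ℕ → ℝ) (c : ℝ), 0 ≤ c → c ≤ 1 →
      c * M n x w + (1 - c) * M n y w ≤ M n (fun i => c * x i + (1 - c) * y i) w)
    (m : ℕ) (hm : 0 < m) (z : ℕ → ℕ → ℝ) (L : ℕ) (w : ℕ → ℝ) (v : ℝ)
    (hz : ∀ j < m, v ≤ M L (z j) w) :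
    v ≤ M L (fun k => (∑ j ∈ Finset.range m, z j k) / m) w := by
  induction m with
  | zero => omega
  | succ m IH =>
    rcases Nat.eq_zero_or_pos m with rfl | hm'
    · have : (fun k => (∑ j ∈ Finset.range 1, z j k) / (1 : ℕ)) = z 0 := by
        funext k; simp
      rw [this]
      exact hz 0 (by omega)
    · have hA := IH hm' (fun j hj => hz j (by omega))
      set c : ℝ := m / (m + 1) with hc
      have hm1 : (0:ℝ) < (m:ℝ) + 1 := by positivity
      have hc0 : 0 ≤ c := by positivity
      have hc1 : c ≤ 1 := by
        rw [hc, div_le_one hm1]; linarith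
      have h1c : 1 - c = 1 / ((m:ℝ) + 1) := by
        rw [hc]; field_simp; ring
      have key := hconc L w (fun k => (∑ j ∈ Finset.range m, z j k) / m) (z m) c hc0 hc1
      have heq : (fun i => c * ((∑ j ∈ Finset.range m, z j i) / m) + (1 - c) * z m i)
          = fun k => (∑ j ∈ Finset.range (m + 1), z j k) / ((m:ℝ) + 1) := by
        funext k
        rw [Finset.sum_range_succ, h1c, hc]
        have hmne : (m:ℝ) ≠ 0 := by positivity
        field_simp
      rw [heq] at key
      have : v ≤ c * M L (fun k => (∑ j ∈ Finset.range m, z j k) / m) w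
          + (1 - c) * M L (z m) w := by
        have h2 := hz m (by omega)
        nlinarith
      have hcast : ((m + 1 : ℕ) : ℝ) = (m : ℝ) + 1 := by push_cast; ring
      rw [hcast]
      linarith

private lemma mod_shift_inj (len c : ℕ) (hlen : 0 < len) :
    ∀ j1 < len, ∀ j2 < len, (c + j1) % len = (c + j2) % len → j1 = j2 := by
  intro j1 h1 j2 h2 h
  have : j1 % len = j2 % len := Nat.ModEq.add_left_cancel' c h
  rwa [Nat.mod_eq_of_lt h1, Nat.mod_eq_of_lt h2] at this

private lemma mod_shift_image (len c : ℕ) (hlen : 0 < len) :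
    (Finset.range len).image (fun j => (c + j) % len) = Finset.range len := by
  apply Finset.eq_of_subset_of_card_le
  · intro k hk
    simp only [Finset.mem_image, Finset.mem_range] at hk ⊢
    obtain ⟨j, _, rfl⟩ := hk
    exact Nat.mod_lt _ hlen
  · rw [Finset.card_image_of_injOn, Finset.card_range]
    intro j1 h1 j2 h2 h
    exact mod_shift_inj len c hlen j1 (Finset.mem_range.mp (Finset.mem_coe.mp h1))
      j2 (Finset.mem_range.mp (Finset.mem_coe.mp h2)) h

private lemma sum_mod_shift (len c : ℕ) (hlen : 0 < len) (g : ℕ → ℝ) :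
    ∑ j ∈ Finset.range len, g ((c + j) % len) = ∑ j ∈ Finset.range len, g j := by
  have hinj : Set.InjOn (fun j => (c + j) % len) (Finset.range len) := by
    intro j1 h1 j2 h2 h
    exact mod_shift_inj len c hlen j1 (Finset.mem_range.mp (Finset.mem_coe.mp h1))
      j2 (Finset.mem_range.mp (Finset.mem_coe.mp h2)) h
  rw [← Finset.sum_image hinj]
  rw [mod_shift_image len c hlen]

private lemma block_avg (M : ℕ → (ℕ → ℝ) → (ℕ → ℝ) → ℝ)
    (hsym : ∀ n (x w x' w' : ℕ → ℝ),
      (Finset.range n).val.map (fun i => (x i, w i)) =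
        (Finset.range n).val.map (fun i => (x' i, w' i)) → M n x w = M n x' w')
    (hconc : ∀ n (w x y : ℕ → ℝ) (c : ℝ), 0 ≤ c → c ≤ 1 →
      c * M n x w + (1 - c) * M n y w ≤ M n (fun i => c * x i + (1 - c) * y i) w)
    (L a b : ℕ) (hab : a < b) (hbL : b ≤ L) (u : ℕ → ℝ) :
    M L u (fun _ => 1) ≤
      M L (fun k => if a ≤ k ∧ k < b then (∑ j ∈ Finset.Ico a b, u j) / ((b - a : ℕ) : ℝ) else u k)
        (fun _ => 1) := by
  set len := b - a with hlen0
  have hlen : 0 < len := by omega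
  set π : ℕ → ℕ → ℕ := fun j k => if a ≤ k ∧ k < b then a + ((k - a + j) % len) else k with hπ
  set z : ℕ → ℕ → ℝ := fun j k => u (π j k) with hzdef
  have hπmem : ∀ j k, a ≤ k → k < b → a ≤ π j k ∧ π j k < b := by
    intro j k h1 h2
    have : (k - a + j) % len < len := Nat.mod_lt _ hlen
    simp only [hπ, if_pos (And.intro h1 h2)]
    omega
  have hπinj : ∀ j, Set.InjOn (π j) (Finset.range L) := by
    intro j k1 _ k2 _ h
    by_cases c1 : a ≤ k1 ∧ k1 < b <;> by_cases c2 : a ≤ k2 ∧ k2 < b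
    · simp only [hπ, if_pos c1, if_pos c2] at h
      have h' : (j + (k1 - a)) % len = (j + (k2 - a)) % len := by
        rw [Nat.add_comm j, Nat.add_comm j]; omega
      have := mod_shift_inj len j hlen (k1 - a) (by omega) (k2 - a) (by omega) h'
      omega
    · have hk2 : π j k2 = k2 := by simp only [hπ, if_neg c2]
      have h1 := hπmem j k1 c1.1 c1.2
      rw [h, hk2] at h1
      exact absurd h1 c2
    · have hk1 : π j k1 = k1 := by simp only [hπ, if_neg c1]
      have h2 := hπmem j k2 c2.1 c2.2
      rw [← h, hk1] at h2
      exact absurd h2 c1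
    · simpa only [hπ, if_neg c1, if_neg c2] using h
  have hπimg : ∀ j, (Finset.range L).image (π j) = Finset.range L := by
    intro j
    apply Finset.eq_of_subset_of_card_le
    · intro k hk
      simp only [Finset.mem_image, Finset.mem_range] at hk ⊢
      obtain ⟨k', hk', rfl⟩ := hk
      by_cases c : a ≤ k' ∧ k' < b
      · have := hπmem j k' c.1 c.2; omega
      · simp only [hπ, if_neg c]; exact hk'
    · rw [Finset.card_image_of_injOn (hπinj j)]
  have hMeq : ∀ j, M L (z j) (fun _ => 1) = M L u (fun _ => 1) := by
    intro j
    apply hsym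
    have hmm : (Finset.range L).val.map (π j) = (Finset.range L).val := by
      rw [← Finset.image_val_of_injOn (hπinj j), hπimg j]
    calc (Finset.range L).val.map (fun i => (z j i, (1:ℝ)))
        = ((Finset.range L).val.map (π j)).map (fun i => (u i, (1:ℝ))) := by
          rw [Multiset.map_map]; rfl
      _ = (Finset.range L).val.map (fun i => (u i, (1:ℝ))) := by rw [hmm]
  -- the average of the shifts is the block-averaged function
  have hzavg : (fun k => (∑ j ∈ Finset.range len, z j k) / (len : ℝ))
      = fun k => if a ≤ k ∧ k < b then (∑ j ∈ Finset.Ico a b, u j) / ((b - a : ℕ) : ℝ)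
          else u k := by
    funext k
    by_cases c : a ≤ k ∧ k < b
    · have hsum : ∑ j ∈ Finset.range len, z j k = ∑ j ∈ Finset.Ico a b, u j := by
        have h1 : ∀ j, z j k = u (a + ((k - a + j) % len)) := by
          intro j; simp only [hzdef, hπ, if_pos c]
        calc ∑ j ∈ Finset.range len, z j k
            = ∑ j ∈ Finset.range len, u (a + (((k - a) + j) % len)) := by
              exact Finset.sum_congr rfl fun j _ => h1 j
          _ = ∑ j ∈ Finset.range len, u (a + j) :=
              sum_mod_shift len (k - a) hlen (fun i => u (a + i))
          _ = ∑ j ∈ Finset.Ico a b, u j := by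
              rw [Finset.sum_Ico_eq_sum_range]
      rw [hsum, if_pos c]
    · have h1 : ∀ j, z j k = u k := by
        intro j; simp only [hzdef, hπ, if_neg c]
      rw [if_neg c]
      rw [Finset.sum_congr rfl fun j _ => h1 j, Finset.sum_const, Finset.card_range]
      have hne : (len : ℝ) ≠ 0 := by positivity
      rw [nsmul_eq_mul]
      field_simp
  have := avg_lemma_aux M hconc len hlen z L (fun _ => 1) (M L u (fun _ => 1))
    (fun j _ => (hMeq j).ge)
  rwa [hzavg] at this

private lemma sorted_prefix_le (Lfull L : ℕ) (hL : L ≤ Lfull) (s s' : ℕ → ℝ)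
    (hperm : (Finset.range Lfull).val.map s' = (Finset.range Lfull).val.map s)
    (hanti : ∀ i j, i ≤ j → j < Lfull → s' j ≤ s' i) :
    ∃ σ : ℕ → ℝ,
      (Finset.range L).val.map (fun i => (σ i, (1:ℝ))) =
        (Finset.range L).val.map (fun i => (s i, (1:ℝ))) ∧
      ∀ k < L, σ k ≤ s' k := by
  classical
  set le : ℝ → ℝ → Bool := fun x y => decide (y ≤ x) with hle
  set p : List ℝ := ((List.range L).map s).mergeSort le with hp
  set q : List ℝ := (List.range Lfull).map s' with hq
  have hplen : p.length = L := by
    rw [hp, List.length_mergeSort, List.length_map, List.length_range]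
  have hqlen : q.length = Lfull := by
    rw [hq, List.length_map, List.length_range]
  set σ : ℕ → ℝ := fun k => p.getD k 0 with hσ
  have hpsorted : List.Pairwise (fun x y : ℝ => y ≤ x) p := by
    have := List.pairwise_mergeSort (le := le)
      (fun a b c h1 h2 => by simp only [hle, decide_eq_true_eq] at h1 h2 ⊢; linarith)
      (fun a b => by simp only [hle, Bool.or_eq_true, decide_eq_true_eq]; exact le_total b a)
      ((List.range L).map s)
    exact this.imp (fun h => by simpa [hle] using h)
  have hqsorted : List.Pairwise (fun x y : ℝ => y ≤ x) q := by
    rw [List.pairwise_iff_getElem]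
    intro i j hi hj hij
    rw [hqlen] at hi hj
    simp only [hq, List.getElem_map, List.getElem_range]
    exact hanti i j (le_of_lt hij) hj
  have hpperm : p.Perm ((List.range L).map s) := List.mergeSort_perm _ _
  have hsubl : ((List.range L).map s).Sublist ((List.range Lfull).map s) :=
    List.Sublist.map s (List.range_sublist.mpr hL)
  have hpermfull : ((List.range Lfull).map s).Perm q := by
    rw [← Multiset.coe_eq_coe]
    have h1 : ∀ f : ℕ → ℝ, ((((List.range Lfull).map f) : List ℝ) : Multiset ℝ)
        = (Finset.range Lfull).val.map f := by
      intro f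
      rw [← Multiset.map_coe, Multiset.coe_range, Finset.range_val]
    rw [h1 s, h1 s', hperm]
  have hsubperm : p.Subperm q :=
    List.Subperm.trans ⟨(List.range L).map s, hpperm.symm, hsubl⟩ hpermfull.subperm
  have hsub : p.Sublist q :=
    List.sublist_of_subperm_of_pairwise (r := fun x y : ℝ => y ≤ x) hsubperm hpsorted hqsorted
  obtain ⟨f, hf⟩ := List.sublist_iff_exists_orderEmbedding_getElem?_eq.mp hsub
  have hlist : (List.range L).map σ = p := by
    apply List.ext_getElem
    · rw [List.length_map, List.length_range, hplen]
    · intro k h1 h2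
      simp only [List.getElem_map, List.getElem_range]
      rw [hσ]
      exact List.getD_eq_getElem p 0 h2
  refine ⟨σ, ?_, ?_⟩
  · have hco : ∀ f : ℕ → ℝ, (Finset.range L).val.map f = ↑((List.range L).map f) := by
      intro f; rw [Finset.range_val, ← Multiset.coe_range, Multiset.map_coe]
    have h2 : (Finset.range L).val.map σ = (Finset.range L).val.map s := by
      rw [hco σ, hco s, Multiset.coe_eq_coe, hlist]
      exact hpperm
    calc (Finset.range L).val.map (fun i => (σ i, (1:ℝ)))
        = ((Finset.range L).val.map σ).map (fun v => (v, (1:ℝ))) := by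
          rw [Multiset.map_map]; rfl
      _ = ((Finset.range L).val.map s).map (fun v => (v, (1:ℝ))) := by rw [h2]
      _ = (Finset.range L).val.map (fun i => (s i, (1:ℝ))) := by
          rw [Multiset.map_map]; rfl
  · intro k hk
    have hk' : k < p.length := by omega
    have h1 : p[k]? = some p[k] := List.getElem?_eq_some_iff.mpr ⟨hk', rfl⟩
    have h2 := hf k
    rw [h1] at h2
    have hfk : f k < q.length := by
      rcases List.getElem?_eq_some_iff.mp h2.symm with ⟨h, _⟩
      exact h
    have h3 : q[f k]? = some q[f k] := List.getElem?_eq_some_iff.mpr ⟨hfk, rfl⟩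
    rw [h3] at h2
    have h4 : p[k] = q[f k] := Option.some.inj h2
    have hqval : q[f k] = s' (f k) := by
      simp only [hq, List.getElem_map, List.getElem_range]
    have hkle : k ≤ f k := f.strictMono.le_apply
    have h5 : s' (f k) ≤ s' k := hanti k (f k) hkle (by omega)
    have h6 : σ k = p[k] := List.getD_eq_getElem p 0 hk'
    rw [h6, h4, hqval]
    exact h5

/-- Let `M` be a symmetric, monotone, Jensen-concave weighted mean (with
integer weights corresponding to repetition of entries; `M n x w` is the mean of the first
`n` entries). For integer weights `λ` and a vector `x`, let `s` repeat `x_n` exactly `λ_n`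
times, let `s'` be a nonincreasing rearrangement of `s`, and let
`y_n = (s'_{Λ_{n-1}+1} + ... + s'_{Λ_n})/λ_n`. Then `y` is nonincreasing, has the same
weighted sum as `x`, and `M((x_1,…,x_n),λ) ≤ M((y_1,…,y_n),λ)` for every `n ≤ N`. -/
theorem samesum_rearrangement (M : ℕ → (ℕ → ℝ) → (ℕ → ℝ) → ℝ) (I : Set ℝ)
    (hsym : ∀ n (x w x' w' : ℕ → ℝ),
      (Finset.range n).val.map (fun i => (x i, w i)) =
        (Finset.range n).val.map (fun i => (x' i, w' i)) → M n x w = M n x' w')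
    (hmono : ∀ n (x y w : ℕ → ℝ), (∀ i < n, x i ≤ y i) → M n x w ≤ M n y w)
    (hconc : ∀ n (w x y : ℕ → ℝ) (c : ℝ), 0 ≤ c → c ≤ 1 →
      c * M n x w + (1 - c) * M n y w ≤ M n (fun i => c * x i + (1 - c) * y i) w)
    (hrep : ∀ n (x : ℕ → ℝ) (w : ℕ → ℕ) (s : ℕ → ℝ), (∀ i < n, 0 < w i) →
      (∀ i < n, ∀ k, (∑ j ∈ Finset.range i, w j) ≤ k →
        k < ∑ j ∈ Finset.range (i + 1), w j → s k = x i) →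
      M n x (fun i => (w i : ℝ)) = M (∑ j ∈ Finset.range n, w j) s (fun _ => 1))
    (N : ℕ) (lam : ℕ → ℕ) (hlam : ∀ n < N, 0 < lam n)
    (x : ℕ → ℝ) (hx : ∀ n < N, x n ∈ I)
    (s s' : ℕ → ℝ)
    (hs : ∀ n < N, ∀ k, (∑ j ∈ Finset.range n, lam j) ≤ k →
      k < ∑ j ∈ Finset.range (n + 1), lam j → s k = x n)
    (hperm : (Finset.range (∑ j ∈ Finset.range N, lam j)).val.map s' =
      (Finset.range (∑ j ∈ Finset.range N, lam j)).val.map s)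
    (hanti : ∀ i j, i ≤ j → j < ∑ jj ∈ Finset.range N, lam jj → s' j ≤ s' i)
    (y : ℕ → ℝ)
    (hy : ∀ n < N, y n =
      (∑ k ∈ Finset.Ico (∑ j ∈ Finset.range n, lam j) (∑ j ∈ Finset.range (n + 1), lam j),
        s' k) / (lam n : ℝ)) :
    (∀ i j, i ≤ j → j < N → y j ≤ y i) ∧
      (∑ n ∈ Finset.range N, (lam n : ℝ) * y n = ∑ n ∈ Finset.range N, (lam n : ℝ) * x n) ∧
      (∀ n < N, M (n + 1) x (fun i => (lam i : ℝ)) ≤ M (n + 1) y (fun i => (lam i : ℝ))) := by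
  classical
  set Lam : ℕ → ℕ := fun k => ∑ j ∈ Finset.range k, lam j with hLam
  have hs' : ∀ n < N, ∀ k, Lam n ≤ k → k < Lam (n+1) → s k = x n := hs
  have hperm' : (Finset.range (Lam N)).val.map s' = (Finset.range (Lam N)).val.map s := hperm
  have hanti' : ∀ i j, i ≤ j → j < Lam N → s' j ≤ s' i := hanti
  have hy' : ∀ n < N, y n = (∑ k ∈ Finset.Ico (Lam n) (Lam (n+1)), s' k) / (lam n : ℝ) := hy
  have hLmono : Monotone Lam := fun a b hab =>
    Finset.sum_le_sum_of_subset (Finset.range_subset_range.mpr hab)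
  have hLsucc : ∀ i, Lam (i+1) = Lam i + lam i := fun i => Finset.sum_range_succ _ _
  have hcard : ∀ n, (Finset.Ico (Lam n) (Lam (n+1))).card = lam n := by
    intro n; rw [Nat.card_Ico, hLsucc]; omega
  have hyblock : ∀ n < N, (lam n : ℝ) * y n = ∑ k ∈ Finset.Ico (Lam n) (Lam (n+1)), s' k := by
    intro n hn
    rw [hy' n hn]
    have hne : (lam n : ℝ) ≠ 0 := Nat.cast_ne_zero.mpr (hlam n hn).ne'
    field_simp
  -- Part 1
  have hadj : ∀ i, i + 1 < N → y (i+1) ≤ y i := by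
    intro i hi
    have hiN : i < N := by omega
    have hl1 := hlam i hiN
    have hl2 := hlam (i+1) hi
    have hs1 := hLsucc i
    have hs2 := hLsucc (i+1)
    have hml : Lam (i+1+1) ≤ Lam N := hLmono (by omega)
    have h1 : Lam (i+1) < Lam N := by omega
    have hlb : s' (Lam (i+1)) ≤ y i := by
      have hsum : (Finset.Ico (Lam i) (Lam (i+1))).card • s' (Lam (i+1))
          ≤ ∑ k ∈ Finset.Ico (Lam i) (Lam (i+1)), s' k := by
        apply Finset.card_nsmul_le_sum
        intro k hk
        rw [Finset.mem_Ico] at hk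
        exact hanti' k (Lam (i+1)) (by omega) h1
      rw [hcard, nsmul_eq_mul] at hsum
      rw [hy' i hiN, le_div_iff₀ (by exact_mod_cast hl1)]
      linarith
    have hub : y (i+1) ≤ s' (Lam (i+1)) := by
      have hsum : ∑ k ∈ Finset.Ico (Lam (i+1)) (Lam (i+1+1)), s' k
          ≤ (Finset.Ico (Lam (i+1)) (Lam (i+1+1))).card • s' (Lam (i+1)) := by
        apply Finset.sum_le_card_nsmul
        intro k hk
        rw [Finset.mem_Ico] at hk
        exact hanti' (Lam (i+1)) k hk.1 (by omega)
      rw [hcard, nsmul_eq_mul] at hsum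
      rw [hy' (i+1) hi, div_le_iff₀ (by exact_mod_cast hl2)]
      linarith
    linarith
  have part1 : ∀ j i, i ≤ j → j < N → y j ≤ y i := by
    intro j
    induction j with
    | zero =>
      intro i hij _
      have h0 : i = 0 := by omega
      exact h0 ▸ le_rfl
    | succ j IH =>
      intro i hij hjN
      rcases Nat.lt_or_ge i (j+1) with h | h
      · exact le_trans (hadj j hjN) (IH i (by omega) (by omega))
      · have h0 : i = j + 1 := by omega
        exact h0 ▸ le_rfl
  -- Part 2
  have hblocksum : ∀ (f : ℕ → ℝ) (m : ℕ),
      ∑ n ∈ Finset.range m, ∑ k ∈ Finset.Ico (Lam n) (Lam (n+1)), f k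
        = ∑ k ∈ Finset.range (Lam m), f k := by
    intro f m
    induction m with
    | zero => simp [hLam]
    | succ m IH =>
      rw [Finset.sum_range_succ, IH, Finset.range_eq_Ico, Finset.range_eq_Ico]
      exact Finset.sum_Ico_consecutive f (Nat.zero_le _) (hLmono (Nat.le_succ m))
  have part2 : ∑ n ∈ Finset.range N, (lam n : ℝ) * y n
      = ∑ n ∈ Finset.range N, (lam n : ℝ) * x n := by
    have h1 : ∑ n ∈ Finset.range N, (lam n : ℝ) * y n = ∑ k ∈ Finset.range (Lam N), s' k := by
      rw [← hblocksum s' N]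
      exact Finset.sum_congr rfl fun n hn => hyblock n (Finset.mem_range.mp hn)
    have h2 : ∑ k ∈ Finset.range (Lam N), s' k = ∑ k ∈ Finset.range (Lam N), s k := by
      have e : ∀ g : ℕ → ℝ,
          ∑ k ∈ Finset.range (Lam N), g k = ((Finset.range (Lam N)).val.map g).sum :=
        fun g => rfl
      rw [e s', e s, hperm']
    have h3 : ∑ k ∈ Finset.range (Lam N), s k = ∑ n ∈ Finset.range N, (lam n : ℝ) * x n := by
      rw [← hblocksum s N]
      apply Finset.sum_congr rfl
      intro n hn
      rw [Finset.mem_range] at hn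
      have hc : ∀ k ∈ Finset.Ico (Lam n) (Lam (n+1)), s k = x n := by
        intro k hk; rw [Finset.mem_Ico] at hk; exact hs' n hn k hk.1 hk.2
      rw [Finset.sum_congr rfl hc, Finset.sum_const, hcard, nsmul_eq_mul]
    rw [h1, h2, h3]
  -- Part 3
  have part3 : ∀ n < N, M (n + 1) x (fun i => (lam i : ℝ)) ≤ M (n + 1) y (fun i => (lam i : ℝ)) := by
    intro n hn
    have hmN : n + 1 ≤ N := hn
    have hLle : Lam (n+1) ≤ Lam N := hLmono hmN
    have hA : M (n+1) x (fun i => (lam i : ℝ)) = M (Lam (n+1)) s (fun _ => 1) :=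
      hrep (n+1) x lam s (fun i hi => hlam i (by omega)) (fun i hi k h1 h2 => hs i (by omega) k h1 h2)
    set t : ℕ → ℝ := fun k =>
      ∑ i ∈ Finset.range N, (if Lam i ≤ k ∧ k < Lam (i+1) then y i else 0) with htdef
    have htblock : ∀ i < N, ∀ k, Lam i ≤ k → k < Lam (i+1) → t k = y i := by
      intro i hi k h1 h2
      rw [htdef]
      simp only
      rw [Finset.sum_eq_single i]
      · rw [if_pos ⟨h1, h2⟩]
      · intro j hj hji
        apply if_neg
        rcases Nat.lt_or_ge j i with h | h
        · have : Lam (j+1) ≤ Lam i := hLmono (by omega)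
          omega
        · have : Lam (i+1) ≤ Lam j := hLmono (by omega)
          omega
      · intro hni; exact absurd (Finset.mem_range.mpr hi) hni
    have hB : M (n+1) y (fun i => (lam i : ℝ)) = M (Lam (n+1)) t (fun _ => 1) :=
      hrep (n+1) y lam t (fun i hi => hlam i (by omega))
        (fun i hi k h1 h2 => htblock i (by omega) k h1 h2)
    obtain ⟨σ, hσeq, hσle⟩ := sorted_prefix_le (Lam N) (Lam (n+1)) hLle s s' hperm' hanti'
    have hC : M (Lam (n+1)) s (fun _ => 1) = M (Lam (n+1)) σ (fun _ => 1) :=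
      (hsym (Lam (n+1)) σ (fun _ => 1) s (fun _ => 1) hσeq).symm
    have hD : M (Lam (n+1)) σ (fun _ => 1) ≤ M (Lam (n+1)) s' (fun _ => 1) :=
      hmono (Lam (n+1)) σ s' (fun _ => 1) hσle
    set vv : ℕ → ℕ → ℝ := fun i k => if k < Lam i then t k else s' k with hvv
    have hstep : ∀ i, i < n + 1 →
        M (Lam (n+1)) (vv i) (fun _ => 1) ≤ M (Lam (n+1)) (vv (i+1)) (fun _ => 1) := by
      intro i hi
      have hiN : i < N := by omega
      have hab : Lam i < Lam (i+1) := by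
        have := hLsucc i; have := hlam i hiN; omega
      have hbL : Lam (i+1) ≤ Lam (n+1) := hLmono (by omega)
      have key := block_avg M hsym hconc (Lam (n+1)) (Lam i) (Lam (i+1)) hab hbL (vv i)
      have heq : (fun k => if Lam i ≤ k ∧ k < Lam (i+1) then
          (∑ j ∈ Finset.Ico (Lam i) (Lam (i+1)), vv i j) / ((Lam (i+1) - Lam i : ℕ) : ℝ)
          else vv i k) = vv (i+1) := by
        funext k
        by_cases c : Lam i ≤ k ∧ k < Lam (i+1)
        · rw [if_pos c]
          have hsum : ∑ j ∈ Finset.Ico (Lam i) (Lam (i+1)), vv i j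
              = ∑ j ∈ Finset.Ico (Lam i) (Lam (i+1)), s' j := by
            apply Finset.sum_congr rfl
            intro j hj
            rw [Finset.mem_Ico] at hj
            simp only [hvv]
            rw [if_neg (by omega)]
          have hsub : ((Lam (i+1) - Lam i : ℕ) : ℝ) = (lam i : ℝ) := by
            have := hLsucc i
            congr 1
            omega
          rw [hsum, hsub, ← hy' i hiN]
          simp only [hvv]
          rw [if_pos c.2]
          exact (htblock i hiN k c.1 c.2).symm
        · rw [if_neg c]
          simp only [hvv]
          rcases Nat.lt_or_ge k (Lam i) with h | h
          · rw [if_pos h, if_pos (by have := hLmono (Nat.le_succ i); omega)]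
          · rw [if_neg (by omega), if_neg (by omega)]
      rw [heq] at key
      exact key
    have hchain : ∀ i, i ≤ n+1 → M (Lam (n+1)) s' (fun _ => 1) ≤ M (Lam (n+1)) (vv i) (fun _ => 1) := by
      intro i
      induction i with
      | zero =>
        intro _
        have h0 : vv 0 = s' := by
          funext k
          simp [hvv, hLam]
        rw [h0]
      | succ i IH =>
        intro hi
        exact le_trans (IH (by omega)) (hstep i (by omega))
    have hE : M (Lam (n+1)) s' (fun _ => 1) ≤ M (Lam (n+1)) (vv (n+1)) (fun _ => 1) :=
      hchain (n+1) le_rfl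
    have hF : M (Lam (n+1)) (vv (n+1)) (fun _ => 1) = M (Lam (n+1)) t (fun _ => 1) := by
      apply hsym
      apply Multiset.map_congr rfl
      intro k hk
      have hkL : k < Lam (n+1) := Finset.mem_range.mp (Finset.mem_val.mp hk)
      simp only [hvv]
      rw [if_pos hkL]
    calc M (n+1) x (fun i => (lam i : ℝ))
        = M (Lam (n+1)) s (fun _ => 1) := hA
      _ = M (Lam (n+1)) σ (fun _ => 1) := hC
      _ ≤ M (Lam (n+1)) s' (fun _ => 1) := hD
      _ ≤ M (Lam (n+1)) (vv (n+1)) (fun _ => 1) := hE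
      _ = M (Lam (n+1)) t (fun _ => 1) := hF
      _ = M (n+1) y (fun i => (lam i : ℝ)) := hB.symm
  exact ⟨fun i j hij hj => part1 j i hij hj, part2, part3⟩
end
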